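/- arXiv:2509.25650 — 3 statements merged into one kernel-verified Lean document; each statement's English description precedes it below -/
import Mathlib

section
/- Let p ≥ 1 be real, w, z ∈ ℂ, and q₀ ≥ 0. Then | |w + z|^{2p} − q₀^{2p} | ≤ 4p (|w| + |z| + q₀)^{2p−1} (|w| + | |z| − q₀ |). -/
/-! Both `‖w + z‖` and `q₀` lie in `[0, M]` with `M = ‖w‖ + ‖z‖ + q₀`, where the derivative of
`t ↦ t ^ (2p)` is at most `2p M ^ (2p - 1)`; the mean value theorem and
`|‖w + z‖ - q₀| ≤ ‖w‖ + |‖z‖ - q₀|` then give the bound, even with `2p` in place of `4p`. -/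

open Real Set

theorem abs_rpow_sub_rpow_le_mul_rpow {q x y M : ℝ} (hq : 1 ≤ q) (hx : x ∈ Icc 0 M)
    (hy : y ∈ Icc 0 M) : |x ^ q - y ^ q| ≤ q * M ^ (q - 1) * |x - y| := by
  have hderiv : ∀ t ∈ Icc 0 M, HasDerivWithinAt (· ^ q) (q * t ^ (q - 1)) (Icc 0 M) t :=
    fun t _ ↦ (hasDerivAt_rpow_const (Or.inr hq)).hasDerivWithinAt
  have hbound : ∀ t ∈ Icc 0 M, ‖q * t ^ (q - 1)‖ ≤ q * M ^ (q - 1) := fun t ht ↦ by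
    rw [Real.norm_of_nonneg (mul_nonneg (by linarith) (rpow_nonneg ht.1 _))]
    gcongr
    exacts [ht.1, ht.2]
  exact (convex_Icc 0 M).norm_image_sub_le_of_norm_hasDerivWithin_le hderiv hbound hy hx

theorem abs_norm_add_sub_le {E : Type*} [SeminormedAddCommGroup E] (w z : E) (r : ℝ) :
    |‖w + z‖ - r| ≤ ‖w‖ + |‖z‖ - r| :=
  calc |‖w + z‖ - r| ≤ |‖w + z‖ - ‖z‖| + |‖z‖ - r| := abs_sub_le _ _ _
    _ ≤ ‖w‖ + |‖z‖ - r| := by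
      gcongr
      simpa using abs_norm_sub_norm_le (w + z) z

/-- | |w+z|^{2p} − q₀^{2p} | ≤ 4p (|w|+|z|+q₀)^{2p−1} (|w| + | |z| − q₀ |), p ≥ 1. -/
theorem pow2p_abs_diff_bound (p : ℝ) (hp : 1 ≤ p) (w z : ℂ) (q0 : ℝ) (hq0 : 0 ≤ q0) :
    |(‖w + z‖ ^ 2) ^ p - (q0 ^ 2) ^ p| ≤
      4 * p * (‖w‖ + ‖z‖ + q0) ^ (2 * p - 1) *
        (‖w‖ + |‖z‖ - q0|) := by
  set M := ‖w‖ + ‖z‖ + q0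
  have hwz : ‖w + z‖ ∈ Icc 0 M :=
    ⟨norm_nonneg _, by linarith [norm_add_le w z]⟩
  have hq0M : q0 ∈ Icc 0 M := ⟨hq0, by linarith [norm_nonneg w, norm_nonneg z]⟩
  have hsq : ∀ {x : ℝ}, 0 ≤ x → (x ^ 2) ^ p = x ^ (2 * p) := fun hx ↦ by
    rw [← rpow_two, ← rpow_mul hx]
  rw [hsq hwz.1, hsq hq0]
  calc _ ≤ 2 * p * M ^ (2 * p - 1) * |‖w + z‖ - q0| :=
        abs_rpow_sub_rpow_le_mul_rpow (by linarith) hwz hq0M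
    _ ≤ 4 * p * M ^ (2 * p - 1) * (‖w‖ + |‖z‖ - q0|) := by
        have hM : 0 ≤ M := hq0M.1.trans hq0M.2
        gcongr
        · linarith
        · exact abs_norm_add_sub_le w z q0
end

section
/- Let ζ ∈ ℓ^∞(ℤ; ℂ) with ζ' = (ζ_n − ζ_{n−1})_n ∈ ℓ² and (|ζ_n| − q₀)_n ∈ ℓ², q₀ > 0, and let p ≥ 1. The generalized Ablowitz–Ladik nonlinearity 𝒢(φ)_n := |φ_n + ζ_n|^{2p}(φ_{n+1} + φ_{n−1} + ζ_{n+1} + ζ_{n−1}) − 2q₀^{2p}(φ_n + ζ_n) maps ℓ² into ℓ² and satisfies ‖𝒢(φ)‖_{ℓ²} ≤ 16p (‖φ‖_{ℓ^∞} + ‖ζ‖_{ℓ^∞} + q₀)^{2p} (‖φ‖_{ℓ²} + ‖|ζ| − q₀‖_{ℓ²}) + 8 q₀^{2p} ‖φ‖_{ℓ²} + 4 q₀^{2p} ‖ζ'‖_{ℓ²}. -/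
noncomputable def l2norm (f : ℤ → ℂ) : ℝ := Real.sqrt (∑' n : ℤ, ‖f n‖ ^ 2)

noncomputable def linfnorm (f : ℤ → ℂ) : ℝ := ⨆ n : ℤ, ‖f n‖

/-- The generalized Ablowitz–Ladik nonlinearity
𝒢(φ)_n = |φ_n+ζ_n|^{2p}(φ_{n+1}+φ_{n−1}+ζ_{n+1}+ζ_{n−1}) − 2q₀^{2p}(φ_n+ζ_n). -/
noncomputable def galNonlin (ζ : ℤ → ℂ) (q0 p : ℝ) (φ : ℤ → ℂ) (n : ℤ) : ℂ :=
  (((‖φ n + ζ n‖ ^ 2) ^ p : ℝ) : ℂ) *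
      (φ (n + 1) + φ (n - 1) + ζ (n + 1) + ζ (n - 1))
    - 2 * (((q0 ^ 2) ^ p : ℝ) : ℂ) * (φ n + ζ n)


/-! With ψ = φ + ζ, split 𝒢(φ)_n as
(|ψ_n|^{2p} − q₀^{2p})(ψ_{n+1} + ψ_{n−1}) + q₀^{2p}(ψ_{n+1} + ψ_{n−1} − 2ψ_n).
All values |ψ_n|, q₀ lie in [0, M] with M = ‖φ‖_∞ + ‖ζ‖_∞ + q₀, so by the mean value theorem for
t ↦ t^{2p} the first factor is at most 2p M^{2p−1} (|φ_n| + ||ζ_n| − q₀|), an ℓ² sequence, while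
|ψ_{n±1}| ≤ M. The second term is a second difference of ψ, i.e. the difference of the backward
difference ψ' = φ' + ζ' and its shift, and φ' ∈ ℓ² since φ ∈ ℓ². -/

theorem memℓp_two_iff_summable_sq {α : Type*} {E : α → Type*} [∀ i, NormedAddCommGroup (E i)]
    {f : ∀ i, E i} : Memℓp f 2 ↔ Summable fun i => ‖f i‖ ^ 2 := by
  simpa using memℓp_gen_iff (p := 2) (f := f) (by norm_num)

theorem Memℓp.comp_equiv {α β : Type*} {E : Type*} [NormedAddCommGroup E] {p : ENNReal}
    {f : β → E} (hf : Memℓp f p) (e : α ≃ β) : Memℓp (f ∘ e) p := by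
  rcases p.trichotomy with rfl | rfl | hp
  · exact memℓp_zero (hf.finite_dsupport.preimage e.injective.injOn)
  · exact memℓp_infty (hf.bddAbove.mono (Set.range_comp_subset_range e fun i => ‖f i‖))
  · exact memℓp_gen (e.summable_iff.2 (hf.summable hp))

theorem norm_le_linfnorm {f : ℤ → ℂ} (hf : Memℓp f ⊤) (n : ℤ) : ‖f n‖ ≤ linfnorm f :=
  le_ciSup hf.bddAbove n

theorem linfnorm_nonneg (f : ℤ → ℂ) : 0 ≤ linfnorm f :=
  Real.iSup_nonneg fun n => norm_nonneg (f n)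

theorem l2norm_eq_norm {f : ℤ → ℂ} (hf : Memℓp f 2) :
    l2norm f = ‖(⟨f, hf⟩ : lp (fun _ : ℤ => ℂ) 2)‖ := by
  rw [l2norm, lp.norm_eq_tsum_rpow (by norm_num), Real.sqrt_eq_rpow]
  norm_num

theorem l2norm_nonneg (f : ℤ → ℂ) : 0 ≤ l2norm f := Real.sqrt_nonneg _

theorem l2norm_ofReal (r : ℤ → ℝ) : l2norm (fun n => (r n : ℂ)) = √(∑' n, |r n| ^ 2) := by
  simp [l2norm]

theorem l2norm_add_le {f g : ℤ → ℂ} (hf : Memℓp f 2) (hg : Memℓp g 2) :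
    l2norm (f + g) ≤ l2norm f + l2norm g := by
  rw [l2norm_eq_norm hf, l2norm_eq_norm hg, l2norm_eq_norm (hf.add hg)]
  exact norm_add_le (⟨f, hf⟩ : lp (fun _ : ℤ => ℂ) 2) ⟨g, hg⟩

theorem l2norm_sub_le {f g : ℤ → ℂ} (hf : Memℓp f 2) (hg : Memℓp g 2) :
    l2norm (f - g) ≤ l2norm f + l2norm g := by
  rw [l2norm_eq_norm hf, l2norm_eq_norm hg, l2norm_eq_norm (hf.sub hg)]
  exact norm_sub_le (⟨f, hf⟩ : lp (fun _ : ℤ => ℂ) 2) ⟨g, hg⟩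

theorem l2norm_const_mul (c : ℂ) (f : ℤ → ℂ) :
    l2norm (fun n => c * f n) = ‖c‖ * l2norm f := by
  simp only [l2norm, norm_mul, mul_pow, tsum_mul_left]
  rw [Real.sqrt_mul (by positivity), Real.sqrt_sq (norm_nonneg _)]

theorem l2norm_ofReal_mul {c : ℝ} (hc : 0 ≤ c) (f : ℤ → ℂ) :
    l2norm (fun n => (c : ℂ) * f n) = c * l2norm f := by
  rw [l2norm_const_mul, Complex.norm_real, Real.norm_of_nonneg hc]

theorem l2norm_comp_equiv (f : ℤ → ℂ) (e : ℤ ≃ ℤ) : l2norm (f ∘ e) = l2norm f := by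
  rw [l2norm, l2norm]
  exact congrArg _ (e.tsum_eq fun n => ‖f n‖ ^ 2)

theorem l2norm_le_of_norm_le {f g : ℤ → ℂ} (hg : Memℓp g 2) (h : ∀ n, ‖f n‖ ≤ ‖g n‖) :
    Memℓp f 2 ∧ l2norm f ≤ l2norm g := by
  have hf := hg.mono' h
  have hsq n : ‖f n‖ ^ 2 ≤ ‖g n‖ ^ 2 := pow_le_pow_left₀ (norm_nonneg _) (h n) 2
  exact ⟨hf, Real.sqrt_le_sqrt (Summable.tsum_le_tsum hsq (memℓp_two_iff_summable_sq.1 hf)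
    (memℓp_two_iff_summable_sq.1 hg))⟩

theorem l2norm_le_of_norm_le_mul_add {f g : ℤ → ℂ} {r : ℤ → ℝ} {C : ℝ} (hC : 0 ≤ C)
    (hg : Memℓp g 2) (hr : Memℓp r 2) (h : ∀ n, ‖f n‖ ≤ C * (‖g n‖ + |r n|)) :
    Memℓp f 2 ∧ l2norm f ≤ C * (l2norm g + √(∑' n, |r n| ^ 2)) := by
  have hg' : Memℓp (fun n => ((‖g n‖ : ℝ) : ℂ)) 2 := hg.mono' fun n => by simp
  have hr' : Memℓp (fun n => ((|r n| : ℝ) : ℂ)) 2 := hr.mono' fun n => by simp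
  have hk n : ‖(C : ℂ) * (((‖g n‖ : ℝ) : ℂ) + ((|r n| : ℝ) : ℂ))‖ = C * (‖g n‖ + |r n|) := by
    rw [← Complex.ofReal_add, ← Complex.ofReal_mul, Complex.norm_real, Real.norm_of_nonneg]
    positivity
  obtain ⟨hf, hf_le⟩ :=
    l2norm_le_of_norm_le ((hg'.add hr').const_mul (C : ℂ)) fun n => (h n).trans (hk n).ge
  refine ⟨hf, hf_le.trans ?_⟩
  rw [l2norm_ofReal_mul hC]
  gcongr
  calc l2norm (fun n => ((‖g n‖ : ℝ) : ℂ) + ((|r n| : ℝ) : ℂ))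
      ≤ l2norm (fun n => ((‖g n‖ : ℝ) : ℂ)) + l2norm (fun n => ((|r n| : ℝ) : ℂ)) :=
        l2norm_add_le hg' hr'
    _ = l2norm g + √(∑' n, |r n| ^ 2) := by simp only [l2norm_ofReal, abs_norm, abs_abs]; rfl

theorem l2norm_backwardDiff_le {φ : ℤ → ℂ} (hφ : Memℓp φ 2) :
    Memℓp (fun n => φ n - φ (n - 1)) 2 ∧ l2norm (fun n => φ n - φ (n - 1)) ≤ 2 * l2norm φ := by
  have hshift : Memℓp (φ ∘ Equiv.subRight 1) 2 := hφ.comp_equiv (Equiv.subRight 1)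
  refine ⟨hφ.sub hshift, (l2norm_sub_le hφ hshift).trans_eq ?_⟩
  rw [l2norm_comp_equiv]
  ring

theorem l2norm_secondDiff_le {ψ : ℤ → ℂ} (hψ : Memℓp (fun n => ψ n - ψ (n - 1)) 2) :
    Memℓp (fun n => ψ (n + 1) + ψ (n - 1) - 2 * ψ n) 2 ∧
      l2norm (fun n => ψ (n + 1) + ψ (n - 1) - 2 * ψ n) ≤
        2 * l2norm (fun n => ψ n - ψ (n - 1)) := by
  set D : ℤ → ℂ := fun n => ψ n - ψ (n - 1)
  have hsecond : (fun n => ψ (n + 1) + ψ (n - 1) - 2 * ψ n) = fun n => D (n + 1) - D n := by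
    ext n
    simp only [D, add_sub_cancel_right]
    ring
  have hshift : Memℓp (D ∘ Equiv.addRight 1) 2 := hψ.comp_equiv (Equiv.addRight 1)
  rw [hsecond]
  refine ⟨hshift.sub hψ, (l2norm_sub_le hshift hψ).trans_eq ?_⟩
  rw [l2norm_comp_equiv]
  ring

theorem abs_rpow_sub_rpow_le {p c a b : ℝ} (hp : 1 ≤ p)
    (ha : a ∈ Set.Icc 0 c) (hb : b ∈ Set.Icc 0 c) :
    |a ^ p - b ^ p| ≤ p * c ^ (p - 1) * |a - b| := by
  have hderiv_le : ∀ x ∈ Set.Icc 0 c, ‖p * x ^ (p - 1)‖ ≤ p * c ^ (p - 1) := fun x hx => by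
    rw [Real.norm_of_nonneg (mul_nonneg (by linarith) (Real.rpow_nonneg hx.1 _))]
    gcongr
    exacts [hx.1, hx.2]
  simpa [Real.norm_eq_abs] using Convex.norm_image_sub_le_of_norm_hasDerivWithin_le
    (fun x _ => (Real.hasDerivAt_rpow_const (Or.inr hp)).hasDerivWithinAt)
    hderiv_le (convex_Icc 0 c) hb ha

theorem norm_sq_rpow_sub_mul_le {p q M : ℝ} (hp : 1 ≤ p) (hq : 0 ≤ q) {x z w : ℂ}
    (hM : ‖x‖ + ‖z‖ + q ≤ M) (hw : ‖w‖ ≤ 2 * M) :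
    ‖(((‖x + z‖ ^ 2) ^ p - (q ^ 2) ^ p : ℝ) : ℂ) * w‖ ≤
      4 * p * M ^ (2 * p) * (‖x‖ + |‖z‖ - q|) := by
  set a := ‖x + z‖
  have ha : a ≤ ‖x‖ + ‖z‖ := norm_add_le x z
  have hM0 : 0 ≤ M := by linarith [norm_nonneg (x + z)]
  have hsq_rpow : ∀ t : ℝ, 0 ≤ t → (t ^ 2) ^ p = t ^ (2 * p) := fun t ht => by
    rw [Real.rpow_mul ht, Real.rpow_two]
  have hpow : M ^ (2 * p - 1) * M = M ^ (2 * p) := by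
    rw [← Real.rpow_add_one' hM0 (by linarith), sub_add_cancel]
  have hdist : |a - q| ≤ ‖x‖ + |‖z‖ - q| := calc
    |a - q| ≤ |a - ‖z‖| + |‖z‖ - q| := abs_sub_le a ‖z‖ q
    _ ≤ ‖x‖ + |‖z‖ - q| := by
      gcongr
      simpa [a] using abs_norm_sub_norm_le (x + z) z
  have hmvt : |a ^ (2 * p) - q ^ (2 * p)| ≤ 2 * p * M ^ (2 * p - 1) * |a - q| :=
    abs_rpow_sub_rpow_le (by linarith) ⟨norm_nonneg _, by linarith [norm_nonneg x]⟩
      ⟨hq, by linarith [norm_nonneg x, norm_nonneg z]⟩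
  have hMp : 0 ≤ M ^ (2 * p - 1) := Real.rpow_nonneg hM0 _
  rw [norm_mul, Complex.norm_real, Real.norm_eq_abs, hsq_rpow a (norm_nonneg _), hsq_rpow q hq]
  calc |a ^ (2 * p) - q ^ (2 * p)| * ‖w‖
      ≤ (2 * p * M ^ (2 * p - 1) * (‖x‖ + |‖z‖ - q|)) * (2 * M) := by
        gcongr
        exact hmvt.trans (by gcongr)
    _ = 4 * p * (M ^ (2 * p - 1) * M) * (‖x‖ + |‖z‖ - q|) := by ring
    _ = 4 * p * M ^ (2 * p) * (‖x‖ + |‖z‖ - q|) := by rw [hpow]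

theorem galNonlin_eq_add (ζ : ℤ → ℂ) (q0 p : ℝ) (φ : ℤ → ℂ) :
    galNonlin ζ q0 p φ =
      (fun n => (((‖φ n + ζ n‖ ^ 2) ^ p - (q0 ^ 2) ^ p : ℝ) : ℂ) *
        (φ (n + 1) + φ (n - 1) + ζ (n + 1) + ζ (n - 1))) +
      fun n => (((q0 ^ 2) ^ p : ℝ) : ℂ) *
        ((φ + ζ) (n + 1) + (φ + ζ) (n - 1) - 2 * (φ + ζ) n) := by
  ext n
  simp only [galNonlin, Pi.add_apply, Complex.ofReal_sub]
  ring

theorem l2norm_amplitudeTerm_le {ζ φ : ℤ → ℂ} {q0 p : ℝ} (hq0 : 0 ≤ q0) (hp : 1 ≤ p)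
    (hζ : Memℓp ζ ⊤) (hζq : Memℓp (fun n => ‖ζ n‖ - q0) 2) (hφ : Memℓp φ 2) :
    let A := fun n => (((‖φ n + ζ n‖ ^ 2) ^ p - (q0 ^ 2) ^ p : ℝ) : ℂ) *
      (φ (n + 1) + φ (n - 1) + ζ (n + 1) + ζ (n - 1))
    Memℓp A 2 ∧ l2norm A ≤
      4 * p * (linfnorm φ + linfnorm ζ + q0) ^ (2 * p) *
        (l2norm φ + √(∑' n, |‖ζ n‖ - q0| ^ 2)) := by
  intro A
  set M := linfnorm φ + linfnorm ζ + q0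
  have hφ_le := norm_le_linfnorm (hφ.of_exponent_ge le_top)
  have hζ_le := norm_le_linfnorm hζ
  have hM n : ‖φ n‖ + ‖ζ n‖ + q0 ≤ M := by linarith [hφ_le n, hζ_le n]
  have hw n : ‖φ (n + 1) + φ (n - 1) + ζ (n + 1) + ζ (n - 1)‖ ≤ 2 * M := by
    have := norm_add₄_le (a := φ (n + 1)) (b := φ (n - 1)) (c := ζ (n + 1)) (d := ζ (n - 1))
    linarith [hφ_le (n + 1), hφ_le (n - 1), hζ_le (n + 1), hζ_le (n - 1)]
  have hMp : 0 ≤ M ^ (2 * p) :=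
    Real.rpow_nonneg (by linarith [linfnorm_nonneg φ, linfnorm_nonneg ζ]) _
  exact l2norm_le_of_norm_le_mul_add (by positivity) hφ hζq
    fun n => norm_sq_rpow_sub_mul_le hp hq0 (hM n) (hw n)

theorem l2norm_secondDiff_add_le {φ ζ : ℤ → ℂ} (hφ : Memℓp φ 2)
    (hζ' : Memℓp (fun n => ζ n - ζ (n - 1)) 2) :
    Memℓp (fun n => (φ + ζ) (n + 1) + (φ + ζ) (n - 1) - 2 * (φ + ζ) n) 2 ∧
      l2norm (fun n => (φ + ζ) (n + 1) + (φ + ζ) (n - 1) - 2 * (φ + ζ) n) ≤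
        4 * l2norm φ + 2 * l2norm (fun n => ζ n - ζ (n - 1)) := by
  obtain ⟨hDφ, hDφ_le⟩ := l2norm_backwardDiff_le hφ
  have hDψ : (fun n => (φ + ζ) n - (φ + ζ) (n - 1)) =
      (fun n => φ n - φ (n - 1)) + fun n => ζ n - ζ (n - 1) := by
    ext n
    simp only [Pi.add_apply]
    ring
  obtain ⟨hΔ, hΔ_le⟩ := l2norm_secondDiff_le (hDψ ▸ hDφ.add hζ')
  exact ⟨hΔ, by linarith [hDψ ▸ hΔ_le, l2norm_add_le hDφ hζ']⟩

/-- 𝒢 maps ℓ² into ℓ² with the stated bound. -/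
theorem galNonlin_into_l2 (ζ : ℤ → ℂ) (q0 p : ℝ) (hq0 : 0 < q0) (hp : 1 ≤ p)
    (hζ : Memℓp ζ ⊤)
    (hζ' : Memℓp (fun n : ℤ => ζ n - ζ (n - 1)) 2)
    (hζq : Memℓp (fun n : ℤ => (‖ζ n‖ - q0 : ℝ)) 2)
    (φ : ℤ → ℂ) (hφ : Memℓp φ 2) :
    Memℓp (galNonlin ζ q0 p φ) 2 ∧
    l2norm (galNonlin ζ q0 p φ) ≤
      16 * p * (linfnorm φ + linfnorm ζ + q0) ^ (2 * p) *
          (l2norm φ + Real.sqrt (∑' n : ℤ, |‖ζ n‖ - q0| ^ 2))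
        + 8 * (q0 ^ 2) ^ p * l2norm φ
        + 4 * (q0 ^ 2) ^ p * l2norm (fun n => ζ n - ζ (n - 1)) := by
  obtain ⟨hA, hA_le⟩ := l2norm_amplitudeTerm_le hq0.le hp hζ hζq hφ
  obtain ⟨hΔ, hΔ_le⟩ := l2norm_secondDiff_add_le hφ hζ'
  have hc : 0 ≤ (q0 ^ 2) ^ p := Real.rpow_nonneg (sq_nonneg q0) p
  have hB := hΔ.const_mul (((q0 ^ 2) ^ p : ℝ) : ℂ)
  rw [galNonlin_eq_add]
  refine ⟨hA.add hB, (l2norm_add_le hA hB).trans ?_⟩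
  rw [l2norm_ofReal_mul hc]
  have hMp : 0 ≤ (linfnorm φ + linfnorm ζ + q0) ^ (2 * p) :=
    Real.rpow_nonneg (by linarith [linfnorm_nonneg φ, linfnorm_nonneg ζ]) _
  have hφ0 := l2norm_nonneg φ
  have hA_nonneg : 0 ≤ p * (linfnorm φ + linfnorm ζ + q0) ^ (2 * p) *
      (l2norm φ + √(∑' n : ℤ, |‖ζ n‖ - q0| ^ 2)) := by positivity
  linarith [mul_le_mul_of_nonneg_left hΔ_le hc, mul_nonneg hc hφ0,
    mul_nonneg hc (l2norm_nonneg fun n => ζ n - ζ (n - 1))]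
end

section
/- Let N ≥ 2, h > 0, κ, γ real, and let ζ : {0,…,N} → ℂ be given. Suppose Φ : [0,T] → ℂ^{N+1} is a C¹ solution of the finite-lattice modified gDNLS system i Φ_n' + κ(Φ_{n+1} + Φ_{n−1} − 2Φ_n + ζ_{n+1} + ζ_{n−1} − 2ζ_n) + γ[F(|Φ_n + ζ_n|²) − F(q₀²)](Φ_n + ζ_n) = 0 for 1 ≤ n ≤ N−1, with homogeneous Dirichlet boundary conditions Φ_0(t) = Φ_N(t) = 0 and ζ_0 = ζ_N = 0, where F : ℝ → ℝ is real-valued. Then the functional 𝒫[Φ(t)] := (1/2) Σ_{n=1}^{N−1} |Φ_n(t)|² + Re Σ_{n=1}^{N−1} Φ_n(t) \overline{ζ_n} is conserved: 𝒫[Φ(t)] = 𝒫[Φ(0)] for all t ∈ [0,T]. -/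
/-!
With `Ψ = Φ + ζ`, the functional is `½ Σ |Ψ_n|²` up to a constant, so its derivative is
`Re Σ Φ_n' conj Ψ_n`. The equation gives `Φ_n' = i (κ ΔΨ_n + γ g_n Ψ_n)` with `g_n` real, so the
nonlinearity drops out and the derivative is `-κ Im Σ ΔΨ_n conj Ψ_n`. Since `Ψ_0 = Ψ_N = 0`, the
shifts `n ↦ n - 1` and `n ↦ n + 1` are adjoint on `1 ≤ n ≤ N - 1`, which makes this sum real.
-/

open Finset ComplexConjugate

def latticeLaplacian {R : Type*} [Ring R] (Ψ : ℤ → R) (n : ℤ) : R :=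
  Ψ (n + 1) + Ψ (n - 1) - 2 * Ψ n

theorem sum_Ioo_sub_one_mul_star_eq_star_sum_add_one {R : Type*} [NonUnitalNonAssocSemiring R]
    [StarRing R] (Ψ : ℤ → R) {a b : ℤ} (ha : Ψ a = 0) (hb : Ψ b = 0) :
    ∑ n ∈ Ioo a b, Ψ (n - 1) * star (Ψ n) = star (∑ n ∈ Ioo a b, Ψ (n + 1) * star (Ψ n)) := by
  have hdown : ∑ n ∈ Ioo a b, Ψ (n - 1) * star (Ψ n) = ∑ n ∈ Ioc a b, Ψ (n - 1) * star (Ψ n) :=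
    sum_subset Ioo_subset_Ioc_self fun n hn hn' => by
      obtain rfl : n = b := by simp only [mem_Ioc, mem_Ioo] at hn hn'; omega
      simp [hb]
  have hup : ∑ n ∈ Ioo a b, Ψ (n + 1) * star (Ψ n) = ∑ n ∈ Ico a b, Ψ (n + 1) * star (Ψ n) :=
    sum_subset Ioo_subset_Ico_self fun n hn hn' => by
      obtain rfl : n = a := by simp only [mem_Ico, mem_Ioo] at hn hn'; omega
      simp [ha]
  have hshift : ∑ n ∈ Ioc a b, Ψ (n - 1) * star (Ψ n) = ∑ m ∈ Ico a b, Ψ m * star (Ψ (m + 1)) :=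
    sum_nbij' (· - 1) (· + 1) (fun n hn => by simp only [mem_Ioc, mem_Ico] at hn ⊢; omega)
      (fun m hm => by simp only [mem_Ioc, mem_Ico] at hm ⊢; omega) (fun n _ => by simp)
      (fun m _ => by simp) (fun n _ => by simp)
  rw [hdown, hup, hshift, star_sum]
  simp only [star_mul, star_star]

theorem im_sum_Ioo_latticeLaplacian_mul_conj_eq_zero (Ψ : ℤ → ℂ) {a b : ℤ} (ha : Ψ a = 0)
    (hb : Ψ b = 0) : (∑ n ∈ Ioo a b, latticeLaplacian Ψ n * conj (Ψ n)).im = 0 := by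
  have hadj := sum_Ioo_sub_one_mul_star_eq_star_sum_add_one Ψ ha hb
  simp only [latticeLaplacian, add_mul, sub_mul, sum_add_distrib, sum_sub_distrib, mul_assoc,
    ← mul_sum, Complex.star_def] at hadj ⊢
  rw [hadj, Complex.sub_im, Complex.add_im, Complex.conj_im, add_neg_cancel, zero_sub, neg_eq_zero]
  simp only [Complex.mul_conj, ← Complex.ofReal_sum]
  simp

theorem half_norm_sq_add_re_mul_conj (z w : ℂ) :
    1 / 2 * ‖z‖ ^ 2 + (z * conj w).re = 1 / 2 * ‖z + w‖ ^ 2 - 1 / 2 * ‖w‖ ^ 2 := by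
  simp only [Complex.sq_norm, Complex.normSq_add]
  ring

theorem hasDerivAt_half_sum_norm_sq_add_re_sum_mul_conj {ι : Type*} (S : Finset ι) (ζ : ι → ℂ)
    {f : ℝ → ι → ℂ} {f' : ι → ℂ} {t : ℝ} (hf : ∀ n ∈ S, HasDerivAt (fun s => f s n) (f' n) t) :
    HasDerivAt (fun s => 1 / 2 * ∑ n ∈ S, ‖f s n‖ ^ 2 + (∑ n ∈ S, f s n * conj (ζ n)).re)
      (∑ n ∈ S, (f' n * conj (f t n + ζ n)).re) t := by
  have hP : (fun s => 1 / 2 * ∑ n ∈ S, ‖f s n‖ ^ 2 + (∑ n ∈ S, f s n * conj (ζ n)).re)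
      = fun s => ∑ n ∈ S, (1 / 2 * ‖f s n + ζ n‖ ^ 2 - 1 / 2 * ‖ζ n‖ ^ 2) := by
    funext s
    simp only [mul_sum, Complex.re_sum, ← sum_add_distrib, half_norm_sq_add_re_mul_conj]
  rw [hP]
  refine HasDerivAt.fun_sum fun n hn => ?_
  convert (((hf n hn).add_const (ζ n)).norm_sq.const_mul (1 / 2)).sub_const (1 / 2 * ‖ζ n‖ ^ 2)
    using 1
  rw [Complex.inner]
  ring

theorem re_mul_conj_eq_neg_mul_im_of_I_mul_add {z z' w : ℂ} {κ c : ℝ}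
    (hz : Complex.I * z' + κ * w + c * z = 0) :
    (z' * conj z).re = -κ * (w * conj z).im := by
  have hz' : z' = Complex.I * (κ * w + c * z) := by
    linear_combination (-Complex.I) * hz + z' * Complex.I_sq
  subst hz'
  simp only [Complex.mul_re, Complex.mul_im, Complex.add_re, Complex.add_im, Complex.ofReal_re,
    Complex.ofReal_im, Complex.I_re, Complex.I_im, Complex.conj_re, Complex.conj_im]
  ring

theorem sum_re_mul_conj_eq_zero_of_dnls {Ψ Ψ' : ℤ → ℂ} {a b : ℤ} (ha : Ψ a = 0) (hb : Ψ b = 0)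
    (κ : ℝ) (g : ℤ → ℝ)
    (hΨ : ∀ n ∈ Ioo a b, Complex.I * Ψ' n + κ * latticeLaplacian Ψ n + g n * Ψ n = 0) :
    ∑ n ∈ Ioo a b, (Ψ' n * conj (Ψ n)).re = 0 := by
  rw [sum_congr rfl fun n hn => re_mul_conj_eq_neg_mul_im_of_I_mul_add (hΨ n hn), ← mul_sum,
    ← Complex.im_sum, im_sum_Ioo_latticeLaplacian_mul_conj_eq_zero Ψ ha hb, mul_zero]

theorem finite_lattice_gdnls_conservation_general
    (N : ℕ) (T κ γ q0 : ℝ)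
    (F : ℝ → ℝ) (ζ : ℤ → ℂ) (Φ Φ' : ℝ → ℤ → ℂ)
    (hderiv : ∀ (n : ℤ) (t : ℝ), HasDerivAt (fun s => Φ s n) (Φ' t n) t)
    (hbc : ∀ t : ℝ, Φ t 0 = 0 ∧ Φ t (N : ℤ) = 0)
    (hζ0 : ζ 0 = 0) (hζN : ζ (N : ℤ) = 0)
    (hode : ∀ t ∈ Set.Icc (0 : ℝ) T, ∀ n : ℤ, 1 ≤ n → n ≤ (N : ℤ) - 1 →
      Complex.I * Φ' t n
        + (κ : ℂ) * (Φ t (n + 1) + Φ t (n - 1) - 2 * Φ t n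
            + ζ (n + 1) + ζ (n - 1) - 2 * ζ n)
        + (γ : ℂ) * ((F (‖Φ t n + ζ n‖ ^ 2) - F (q0 ^ 2) : ℝ) : ℂ)
            * (Φ t n + ζ n) = 0) :
    ∀ t ∈ Set.Icc (0 : ℝ) T,
      (1 / 2) * ∑ n ∈ Finset.Icc (1 : ℤ) ((N : ℤ) - 1), ‖Φ t n‖ ^ 2
        + (∑ n ∈ Finset.Icc (1 : ℤ) ((N : ℤ) - 1), Φ t n * (starRingEnd ℂ) (ζ n)).re
      = (1 / 2) * ∑ n ∈ Finset.Icc (1 : ℤ) ((N : ℤ) - 1), ‖Φ 0 n‖ ^ 2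
        + (∑ n ∈ Finset.Icc (1 : ℤ) ((N : ℤ) - 1), Φ 0 n * (starRingEnd ℂ) (ζ n)).re := by
  have hIcc : Icc (1 : ℤ) (N - 1) = Ioo 0 (N : ℤ) := by
    ext; simp only [mem_Icc, mem_Ioo]; omega
  simp only [hIcc]
  have hderivP (x : ℝ) := hasDerivAt_half_sum_norm_sq_add_re_sum_mul_conj (Ioo (0 : ℤ) N) ζ
    (fun n _ => hderiv n x)
  have hderivP_eq_zero (x : ℝ) (hx : x ∈ Set.Icc 0 T) :
      ∑ n ∈ Ioo (0 : ℤ) N, (Φ' x n * conj (Φ x n + ζ n)).re = 0 := by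
    refine sum_re_mul_conj_eq_zero_of_dnls (Ψ := fun n => Φ x n + ζ n)
      (by simp [(hbc x).1, hζ0]) (by simp [(hbc x).2, hζN]) κ
      (fun n => γ * (F (‖Φ x n + ζ n‖ ^ 2) - F (q0 ^ 2))) fun n hn => ?_
    rw [mem_Ioo] at hn
    rw [Complex.ofReal_mul]
    unfold latticeLaplacian
    linear_combination hode x hx n (by omega) (by omega)
  refine constant_of_has_deriv_right_zero
    (fun x _ => (hderivP x).continuousAt.continuousWithinAt) fun x hx => ?_
  exact hderivP_eq_zero x (Set.Ico_subset_Icc_self hx) ▸ (hderivP x).hasDerivWithinAt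

/-- Conservation of 𝒫[Φ(t)] = (1/2)Σ|Φ_n|² + Re Σ Φ_n conj(ζ_n) for the finite-lattice
modified gDNLS with homogeneous Dirichlet boundary conditions. -/
theorem finite_lattice_gdnls_conservation
    (N : ℕ) (hN : 2 ≤ N) (h T κ γ q0 : ℝ) (hh : 0 < h) (hT : 0 ≤ T) (hq0 : 0 < q0)
    (F : ℝ → ℝ) (ζ : ℤ → ℂ) (Φ Φ' : ℝ → ℤ → ℂ)
    (hderiv : ∀ (n : ℤ) (t : ℝ), HasDerivAt (fun s => Φ s n) (Φ' t n) t)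
    (hbc : ∀ t : ℝ, Φ t 0 = 0 ∧ Φ t (N : ℤ) = 0)
    (hζ0 : ζ 0 = 0) (hζN : ζ (N : ℤ) = 0)
    (hode : ∀ t ∈ Set.Icc (0 : ℝ) T, ∀ n : ℤ, 1 ≤ n → n ≤ (N : ℤ) - 1 →
      Complex.I * Φ' t n
        + (κ : ℂ) * (Φ t (n + 1) + Φ t (n - 1) - 2 * Φ t n
            + ζ (n + 1) + ζ (n - 1) - 2 * ζ n)
        + (γ : ℂ) * ((F (‖Φ t n + ζ n‖ ^ 2) - F (q0 ^ 2) : ℝ) : ℂ)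
            * (Φ t n + ζ n) = 0) :
    ∀ t ∈ Set.Icc (0 : ℝ) T,
      (1 / 2) * ∑ n ∈ Finset.Icc (1 : ℤ) ((N : ℤ) - 1), ‖Φ t n‖ ^ 2
        + (∑ n ∈ Finset.Icc (1 : ℤ) ((N : ℤ) - 1), Φ t n * (starRingEnd ℂ) (ζ n)).re
      = (1 / 2) * ∑ n ∈ Finset.Icc (1 : ℤ) ((N : ℤ) - 1), ‖Φ 0 n‖ ^ 2
        + (∑ n ∈ Finset.Icc (1 : ℤ) ((N : ℤ) - 1), Φ 0 n * (starRingEnd ℂ) (ζ n)).re :=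
  finite_lattice_gdnls_conservation_general N T κ γ q0 F ζ Φ Φ' hderiv hbc hζ0 hζN hode
end
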